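/- arXiv:2305.02940 — 3 statements merged into one kernel-verified Lean document; each statement's English description precedes it below -/
import Mathlib

section
/- Let V be an r-degenerate symplectic space of dimension 2n + r over the finite field F_q, meaning Ψ is an alternating bilinear form on V with radical of dimension r. Then the number of 2-dimensional non-degenerate subspaces of V equals q^{2r} times the number of 2-dimensional non-degenerate subspaces of a non-degenerate symplectic space of dimension 2n over F_q, i.e., it equals q^{2r} · q^{2n-2}(q^{2n}-1)/(q^2-1). -/
/-!
Count the pairs `(u, v)` with `Ψ u v ≠ 0` in two ways. Directly: `u` must avoid the radical
(`q ^ (2n + r) - q ^ r` choices) and then `v` must avoid the hyperplane `ker (Ψ u)`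
(`q ^ (2n + r) - q ^ (2n + r - 1)` choices). Through planes: since `Ψ` is alternating, such a pair
spans a non-degenerate plane, and a non-degenerate plane `W` contains exactly
`(q ^ 2 - 1) * (q ^ 2 - q)` of these pairs, by the first count applied to `W`, whose radical is `0`.
-/

open Module LinearMap
open LinearMap (BilinForm)

section Counting

variable {K U : Type*} [Field K] [Fintype K] [AddCommGroup U] [Module K U]
  [FiniteDimensional K U]

lemma LinearMap.card_apply_ne_zero {M : Type*} [AddCommGroup M] [Module K M] (f : U →ₗ[K] M) :
    Nat.card {u : U // f u ≠ 0} =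
      Fintype.card K ^ finrank K U - Fintype.card K ^ finrank K (ker f) := by
  classical
  have := Module.finite_of_finite K (M := U)
  have : Fintype U := Fintype.ofFinite U
  rw [Nat.card_eq_fintype_card, Fintype.card_subtype_compl, ← card_eq_pow_finrank,
    ← card_eq_pow_finrank]
  rfl

lemma Module.Dual.card_apply_ne_zero {f : Dual K U} (hf : f ≠ 0) :
    Nat.card {u : U // f u ≠ 0} =
      Fintype.card K ^ finrank K U - Fintype.card K ^ (finrank K U - 1) := by
  rw [LinearMap.card_apply_ne_zero f, ← Dual.finrank_ker_add_one_of_ne_zero hf,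
    Nat.add_sub_cancel]

lemma LinearMap.BilinForm.card_apply_ne_zero (B : BilinForm K U) :
    Nat.card {p : U × U // B p.1 p.2 ≠ 0} =
      (Fintype.card K ^ finrank K U - Fintype.card K ^ finrank K (ker B)) *
        (Fintype.card K ^ finrank K U - Fintype.card K ^ (finrank K U - 1)) := by
  classical
  have := Module.finite_of_finite K (M := U)
  have : Fintype U := Fintype.ofFinite U
  set c := Fintype.card K ^ finrank K U - Fintype.card K ^ (finrank K U - 1)
  have hrow (u : U) : Nat.card {v : U // B u v ≠ 0} = if B u ≠ 0 then c else 0 := by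
    split_ifs with hu
    · exact Dual.card_apply_ne_zero hu
    · simp [not_not.mp hu]
  rw [Nat.card_congr (Equiv.subtypeProdEquivSigmaSubtype fun u v => B u v ≠ 0),
    Nat.card_sigma, Finset.sum_congr rfl fun u _ => hrow u, Finset.sum_ite, Finset.sum_const,
    Finset.sum_const_zero, smul_eq_mul, add_zero, ← LinearMap.card_apply_ne_zero B,
    Nat.card_eq_fintype_card, Fintype.card_subtype]

end Counting

namespace LinearMap.BilinForm.IsAlt

variable {K V : Type*} [Field K] [AddCommGroup V] [Module K V] {Ψ : BilinForm K V}
  {u v : V}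

lemma eq_zero_of_apply_smul_add_smul_eq_zero (hΨ : Ψ.IsAlt) (h : Ψ u v ≠ 0) {a b : K}
    (hv : Ψ (a • u + b • v) v = 0) (hu : Ψ u (a • u + b • v) = 0) : a = 0 ∧ b = 0 := by
  simp only [map_add, map_smul, LinearMap.add_apply, LinearMap.smul_apply, hΨ u, hΨ v,
    smul_eq_mul, mul_zero, zero_add, add_zero] at hv hu
  exact ⟨(mul_eq_zero.mp hv).resolve_right h, (mul_eq_zero.mp hu).resolve_right h⟩

lemma linearIndependent_pair (hΨ : Ψ.IsAlt) (h : Ψ u v ≠ 0) : LinearIndependent K ![u, v] :=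
  LinearIndependent.pair_iff.mpr fun a b hab =>
    hΨ.eq_zero_of_apply_smul_add_smul_eq_zero h (by simp [hab]) (by simp [hab])

lemma finrank_span_pair (hΨ : Ψ.IsAlt) (h : Ψ u v ≠ 0) :
    finrank K (Submodule.span K {u, v}) = 2 := by
  have := finrank_span_eq_card (hΨ.linearIndependent_pair h)
  rwa [Matrix.range_cons_cons_empty, Fintype.card_fin] at this

lemma nondegenerate_restrict_span_pair (hΨ : Ψ.IsAlt) (h : Ψ u v ≠ 0) :
    (Ψ.restrict (Submodule.span K {u, v})).Nondegenerate := by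
  refine (IsRefl.nondegenerate_iff_separatingLeft (B := Ψ.restrict _)
    fun x y => hΨ.isRefl x y).mpr ?_
  rintro ⟨m, hm⟩ hm0
  obtain ⟨a, b, rfl⟩ := Submodule.mem_span_pair.mp hm
  have hv := hm0 ⟨v, Submodule.subset_span (by simp)⟩
  have hu := hΨ.isRefl _ _ (hm0 ⟨u, Submodule.subset_span (by simp)⟩)
  obtain ⟨rfl, rfl⟩ := hΨ.eq_zero_of_apply_smul_add_smul_eq_zero h hv hu
  simp

variable [Fintype K]

lemma card_apply_ne_zero_and_span_eq (hΨ : Ψ.IsAlt) {W : Submodule K V} (hW : finrank K W = 2)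
    (hnd : (Ψ.restrict W).Nondegenerate) :
    Nat.card {p : V × V // Ψ p.1 p.2 ≠ 0 ∧ Submodule.span K {p.1, p.2} = W} =
      (Fintype.card K ^ 2 - 1) * (Fintype.card K ^ 2 - Fintype.card K) := by
  have : FiniteDimensional K W := Module.finite_of_finrank_eq_succ hW
  have mem {p : V × V} (hp : Submodule.span K {p.1, p.2} = W) : p.1 ∈ W ∧ p.2 ∈ W :=
    ⟨hp ▸ Submodule.subset_span (by simp), hp ▸ Submodule.subset_span (by simp)⟩
  let e : {p : V × V // Ψ p.1 p.2 ≠ 0 ∧ Submodule.span K {p.1, p.2} = W} ≃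
      {p : W × W // Ψ.restrict W p.1 p.2 ≠ 0} :=
    { toFun p := ⟨(⟨p.1.1, (mem p.2.2).1⟩, ⟨p.1.2, (mem p.2.2).2⟩), p.2.1⟩
      invFun p := ⟨(p.1.1, p.1.2), p.2, Submodule.eq_of_le_of_finrank_eq
        (Submodule.span_le.mpr (by simp [Set.insert_subset_iff]))
        ((hΨ.finrank_span_pair (u := (p.1.1 : V)) (v := (p.1.2 : V)) p.2).trans hW.symm)⟩
      left_inv _ := rfl
      right_inv _ := rfl }
  rw [Nat.card_congr e, BilinForm.card_apply_ne_zero, hnd.ker_eq_bot, finrank_bot, hW]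
  simp

variable [FiniteDimensional K V]

lemma card_nondegenerate_finrank_two_mul (hΨ : Ψ.IsAlt) :
    Nat.card {W : Submodule K V // finrank K W = 2 ∧ (Ψ.restrict W).Nondegenerate} *
        ((Fintype.card K ^ 2 - 1) * (Fintype.card K ^ 2 - Fintype.card K)) =
      (Fintype.card K ^ finrank K V - Fintype.card K ^ finrank K (ker Ψ)) *
        (Fintype.card K ^ finrank K V - Fintype.card K ^ (finrank K V - 1)) := by
  classical
  have := Module.finite_of_finite K (M := V)
  have : Fintype V := Fintype.ofFinite V
  let spanPair : {p : V × V // Ψ p.1 p.2 ≠ 0} →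
      {W : Submodule K V // finrank K W = 2 ∧ (Ψ.restrict W).Nondegenerate} := fun p =>
    ⟨_, hΨ.finrank_span_pair p.2, hΨ.nondegenerate_restrict_span_pair p.2⟩
  have fiber (W) : Nat.card {p // spanPair p = W} =
      (Fintype.card K ^ 2 - 1) * (Fintype.card K ^ 2 - Fintype.card K) := by
    rw [← hΨ.card_apply_ne_zero_and_span_eq W.2.1 W.2.2,
      ← Nat.card_congr (Equiv.subtypeSubtypeEquivSubtypeInter _ _)]
    exact Nat.card_congr (Equiv.subtypeEquivRight fun _ => Subtype.ext_iff)
  rw [← BilinForm.card_apply_ne_zero, ← Nat.card_congr (Equiv.sigmaFiberEquiv spanPair),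
    Nat.card_sigma, Finset.sum_congr rfl fun W _ => fiber W, Finset.sum_const, smul_eq_mul,
    Finset.card_univ, Nat.card_eq_fintype_card]

end LinearMap.BilinForm.IsAlt

lemma pow_sub_pow_mul_pow_sub_pow {q : ℕ} (hq : 1 ≤ q) (n r : ℕ) :
    (q ^ (2 * n + r) - q ^ r) * (q ^ (2 * n + r) - q ^ (2 * n + r - 1)) =
      q ^ (2 * r) * (q ^ (2 * n - 2) * (q ^ (2 * n) - 1)) * (q ^ 2 - q) := by
  rcases n with _ | m
  · simp
  have e1 : 2 * (m + 1) + r = (2 * m + r + 1) + 1 := by ring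
  have e2 : 2 * (m + 1) - 2 = 2 * m := by omega
  rw [e1, e2, Nat.add_sub_cancel]
  have h1 : q ^ r ≤ q ^ (2 * m + r + 1 + 1) := Nat.pow_le_pow_right hq (by omega)
  have h2 : q ^ (2 * m + r + 1) ≤ q ^ (2 * m + r + 1 + 1) := Nat.pow_le_pow_right hq (by omega)
  have h3 : 1 ≤ q ^ (2 * (m + 1)) := Nat.one_le_pow _ _ hq
  have h4 : q ≤ q ^ 2 := by nlinarith
  zify [h1, h2, h3, h4]
  ring

theorem stmt_6 {K V : Type*} [Field K] [Fintype K] [AddCommGroup V] [Module K V]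
    [FiniteDimensional K V]
    (q n r : ℕ) (hq : Fintype.card K = q)
    (hV : Module.finrank K V = 2 * n + r)
    (Ψ : LinearMap.BilinForm K V) (hΨ : Ψ.IsAlt)
    (hrad : Module.finrank K ↥(Ψ.orthogonal ⊤) = r) :
    Nat.card {W : Submodule K V //
        Module.finrank K W = 2 ∧ (Ψ.restrict W).Nondegenerate} * (q ^ 2 - 1) =
      q ^ (2 * r) * (q ^ (2 * n - 2) * (q ^ (2 * n) - 1)) := by
  subst hq
  have hq : 1 < Fintype.card K := Fintype.one_lt_card
  have hcount := hΨ.card_nondegenerate_finrank_two_mul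
  rw [← BilinForm.orthogonal_top_eq_ker hΨ.isRefl, hrad, hV,
    pow_sub_pow_mul_pow_sub_pow hq.le, ← mul_assoc] at hcount
  exact Nat.eq_of_mul_eq_mul_right (Nat.sub_pos_of_lt (lt_self_pow₀ hq one_lt_two)) hcount
end

section
/- Let V be a symplectic space of dimension 2n over F_q, n ≥ 2, and fix a 2-dimensional non-degenerate subspace S. Then the number of 2-dimensional non-degenerate subspaces W such that dim(S + W) = 4 and the restriction of the form to S + W is degenerate equals (q^{2n-2} − 1)(q^{2n-3} − q). -/
/-!
Split `V = S ⊕ S^⊥` and write a spanning pair of `W` as `wᵢ = sᵢ + tᵢ`. Then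
`S + W = S ⊕ ⟨t₁, t₂⟩` is an orthogonal sum, so it has dimension 4 iff `t₁, t₂` are independent,
and its radical is the radical of `T = ⟨t₁, t₂⟩`, which is nonzero iff `Ψ(t₁, t₂) = 0`. Moreover
`Ψ(w₁, w₂) = Ψ(s₁, s₂) + Ψ(t₁, t₂)`. So `(w₁, w₂)` spans an admissible `W` exactly when
`Ψ(s₁, s₂) ≠ 0` (i.e. `(s₁, s₂)` is a basis of `S`) and `(t₁, t₂)` is an independent isotropic
pair of the `(2n-2)`-dimensional symplectic space `S^⊥`. There are
`(q² - 1)(q² - q) · (q^{2n-2} - 1)(q^{2n-3} - q)` such pairs, and each `W` has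
`(q² - 1)(q² - q)` ordered bases.
-/

open Module Submodule

section Counting

variable {α β : Type*}

lemma Nat.card_sigma_of_card_eq [Finite α] {γ : α → Type*} [∀ a, Finite (γ a)] {c : ℕ}
    (h : ∀ a, Nat.card (γ a) = c) : Nat.card (Σ a, γ a) = Nat.card α * c := by
  have := Fintype.ofFinite α
  simp [Nat.card_sigma, h, Nat.card_eq_fintype_card]

lemma Nat.card_eq_card_mul_of_card_fiber [Finite α] [Finite β] (f : α → β) {c : ℕ}
    (h : ∀ b, Nat.card {a // f a = b} = c) : Nat.card α = Nat.card β * c := by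
  rw [← Nat.card_sigma_of_card_eq h, Nat.card_congr (Equiv.sigmaFiberEquiv f)]

lemma Nat.card_subtype_prod_of_card_eq [Finite α] [Finite β] (P : α → Prop)
    (Q : α → β → Prop) {c : ℕ} (h : ∀ a, P a → Nat.card {b // Q a b} = c) :
    Nat.card {p : α × β // P p.1 ∧ Q p.1 p.2} = Nat.card {a // P a} * c := by
  rw [← Nat.card_sigma_of_card_eq (γ := fun a : {a // P a} => {b // Q a b}) fun a => h a a.2]
  exact Nat.card_congr
    { toFun := fun p => ⟨⟨p.1.1, p.2.1⟩, ⟨p.1.2, p.2.2⟩⟩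
      invFun := fun p => ⟨(p.1.1, p.2.1), p.1.2, p.2.2⟩ }

end Counting

lemma Submodule.sup_span_pair_add_eq {R M : Type*} [Ring R] [AddCommGroup M] [Module R M]
    {S : Submodule R M} {s₁ s₂ : M} (hs₁ : s₁ ∈ S) (hs₂ : s₂ ∈ S) (t₁ t₂ : M) :
    S ⊔ span R {s₁ + t₁, s₂ + t₂} = S ⊔ span R {t₁, t₂} := by
  refine le_antisymm (sup_le le_sup_left ?_) (sup_le le_sup_left ?_) <;>
    simp only [span_le, Set.insert_subset_iff, Set.singleton_subset_iff, SetLike.mem_coe]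
  · exact ⟨add_mem (mem_sup_left hs₁) (mem_sup_right (subset_span (by simp))),
      add_mem (mem_sup_left hs₂) (mem_sup_right (subset_span (by simp)))⟩
  · exact ⟨(add_mem_cancel_left (mem_sup_left hs₁)).1 (mem_sup_right (subset_span (by simp))),
      (add_mem_cancel_left (mem_sup_left hs₂)).1 (mem_sup_right (subset_span (by simp)))⟩

section Pairs

variable {K M : Type*} [Field K] [AddCommGroup M] [Module K M]

lemma linearIndependent_pair_iff_finrank_span {x y : M} :
    LinearIndependent K ![x, y] ↔ finrank K (span K {x, y}) = 2 := by
  rw [linearIndependent_iff_card_eq_finrank_span, Set.finrank, Matrix.range_cons_cons_empty]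
  simp [eq_comm]

lemma linearIndependent_pair_coe_iff {W : Submodule K M} {x y : W} :
    LinearIndependent K ![(x : M), y] ↔ LinearIndependent K ![x, y] := by
  simp only [LinearIndependent.pair_iff, ← coe_smul, ← coe_add, coe_eq_zero]

lemma span_pair_eq_iff [FiniteDimensional K M] {W : Submodule K M} (hW : finrank K W = 2)
    {x y : M} : span K {x, y} = W ↔ x ∈ W ∧ y ∈ W ∧ LinearIndependent K ![x, y] := by
  rw [linearIndependent_pair_iff_finrank_span]
  constructor
  · rintro rfl
    exact ⟨subset_span (by simp), subset_span (by simp), hW⟩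
  · rintro ⟨hx, hy, h⟩
    refine eq_of_le_of_finrank_eq ?_ (h.trans hW.symm)
    simpa only [span_le, Set.insert_subset_iff, Set.singleton_subset_iff] using ⟨hx, hy⟩

variable [Fintype K] [FiniteDimensional K M]

lemma natCard_mem_and_not_mem {N P : Submodule K M} (h : N ≤ P) :
    Nat.card {x // x ∈ P ∧ x ∉ N} =
      Fintype.card K ^ finrank K P - Fintype.card K ^ finrank K N := by
  have := Module.finite_of_finite K (M := M)
  change Nat.card ((P : Set M) \ N :) = _
  rw [Nat.card_coe_set_eq, Set.ncard_sdiff h, ← Nat.card_coe_set_eq, ← Nat.card_coe_set_eq]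
  simp only [SetLike.coe_sort_coe]
  rw [Module.natCard_eq_pow_finrank (K := K) (V := P),
    Module.natCard_eq_pow_finrank (K := K) (V := N), Nat.card_eq_fintype_card]

lemma natCard_subtype_ne_zero :
    Nat.card {x : M // x ≠ 0} = Fintype.card K ^ finrank K M - 1 := by
  have e : {x : M // x ≠ 0} ≃
      {x // x ∈ (⊤ : Submodule K M) ∧ x ∉ (⊥ : Submodule K M)} :=
    Equiv.subtypeEquivRight fun x => by simp
  rw [Nat.card_congr e, natCard_mem_and_not_mem bot_le]
  simp

lemma natCard_linearIndependent_pair (h : 2 ≤ finrank K M) :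
    Nat.card {p : M × M // LinearIndependent K ![p.1, p.2]} =
      (Fintype.card K ^ finrank K M - 1) * (Fintype.card K ^ finrank K M - Fintype.card K) := by
  have := Module.finite_of_finite K (M := M)
  rw [Nat.card_congr ((finTwoArrowEquiv M).symm.subtypeEquiv (q := fun v => LinearIndependent K v)
    fun p => by rw [finTwoArrowEquiv_symm_apply]), card_linearIndependent h, Fin.prod_univ_two]
  simp

lemma natCard_span_pair_eq {W : Submodule K M} (hW : finrank K W = 2) :
    Nat.card {p : M × M // span K {p.1, p.2} = W} =
      (Fintype.card K ^ 2 - 1) * (Fintype.card K ^ 2 - Fintype.card K) := by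
  rw [← hW, ← natCard_linearIndependent_pair hW.ge]
  exact Nat.card_congr ((Equiv.subtypeEquivRight fun p => span_pair_eq_iff hW).trans
    { toFun := fun p =>
        ⟨(⟨p.1.1, p.2.1⟩, ⟨p.1.2, p.2.2.1⟩), linearIndependent_pair_coe_iff.1 p.2.2.2⟩
      invFun := fun p =>
        ⟨(p.1.1, p.1.2), p.1.1.2, p.1.2.2, linearIndependent_pair_coe_iff.2 p.2⟩ })

lemma natCard_span_pair_mem (𝒲 : Set (Submodule K M)) (h𝒲 : ∀ W ∈ 𝒲, finrank K W = 2) :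
    Nat.card {p : M × M // span K {p.1, p.2} ∈ 𝒲} =
      Nat.card 𝒲 * ((Fintype.card K ^ 2 - 1) * (Fintype.card K ^ 2 - Fintype.card K)) := by
  have := Module.finite_of_finite K (M := M)
  have : Finite (Submodule K M) := Finite.of_injective _ SetLike.coe_injective
  refine Nat.card_eq_card_mul_of_card_fiber (fun p => (⟨_, p.2⟩ : 𝒲)) fun W => ?_
  rw [← natCard_span_pair_eq (h𝒲 W W.2)]
  exact Nat.card_congr ((Equiv.subtypeEquivRight fun p => Subtype.ext_iff).trans
    (Equiv.subtypeSubtypeEquivSubtype (p := fun p : M × M => span K {p.1, p.2} ∈ 𝒲)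
      (q := fun p => span K {p.1, p.2} = W) fun h => h ▸ W.2))

end Pairs

namespace LinearMap.BilinForm

variable {K V : Type*} [Field K] [AddCommGroup V] [Module K V] {B : LinearMap.BilinForm K V}

lemma IsAlt.linearIndependent_of_apply_ne_zero (hB : B.IsAlt) {x y : V} (h : B x y ≠ 0) :
    LinearIndependent K ![x, y] := by
  refine LinearIndependent.pair_iff.2 fun a b hab => ?_
  have hx : b * B x y = 0 := by simpa [hB.self_eq_zero] using congrArg (B x) hab
  have hy : a * B x y = 0 := by simpa [hB.self_eq_zero] using congrArg (B · y) hab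
  exact ⟨(mul_eq_zero.1 hy).resolve_right h, (mul_eq_zero.1 hx).resolve_right h⟩

lemma IsAlt.span_pair_inf_orthogonal_eq_bot_iff (hB : B.IsAlt) {x : V} (hx : x ≠ 0) (y : V) :
    span K {x, y} ⊓ B.orthogonal (span K {x, y}) = ⊥ ↔ B x y ≠ 0 := by
  have hyx : B y x = -B x y := (hB.neg_eq x y).symm
  constructor
  · intro h hxy
    refine hx ((Submodule.eq_bot_iff _).1 h x ⟨subset_span (by simp), ?_⟩)
    rintro _ hz
    obtain ⟨a, b, rfl⟩ := mem_span_pair.1 hz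
    simp [hB.self_eq_zero, hyx, hxy]
  · intro h
    refine (Submodule.eq_bot_iff _).2 fun z ⟨hz, hzo⟩ => ?_
    obtain ⟨a, b, rfl⟩ := mem_span_pair.1 hz
    have h₁ : b * B x y = 0 := by simpa [hB.self_eq_zero] using hzo x (subset_span (by simp))
    have h₂ : a * B x y = 0 := by simpa [hB.self_eq_zero, hyx] using hzo y (subset_span (by simp))
    rw [(mul_eq_zero.1 h₁).resolve_right h, (mul_eq_zero.1 h₂).resolve_right h, zero_smul,
      zero_smul, add_zero]

lemma sup_inf_orthogonal_sup_of_le_orthogonal {S T : Submodule K V}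
    (hS : (B.restrict S).Nondegenerate) (hT : T ≤ B.orthogonal S) :
    (S ⊔ T) ⊓ B.orthogonal (S ⊔ T) = T ⊓ B.orthogonal T := by
  ext z
  constructor
  · rintro ⟨hz, hzo⟩
    obtain ⟨s, hs, t, ht, rfl⟩ := mem_sup.1 hz
    have hs0 : s = 0 := by
      refine congrArg Subtype.val (hS.2 ⟨s, hs⟩ fun s' => ?_)
      have := hzo s' (mem_sup_left s'.2)
      rwa [map_add, hT ht s' s'.2, add_zero] at this
    subst hs0
    rw [zero_add] at hzo ⊢
    exact ⟨ht, orthogonal_le le_sup_right hzo⟩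
  · rintro ⟨hz, hzo⟩
    refine ⟨mem_sup_right hz, fun n hn => ?_⟩
    obtain ⟨s, hs, t, ht, rfl⟩ := mem_sup.1 hn
    rw [map_add, LinearMap.add_apply, hT hz s hs, hzo t ht, add_zero]

variable [FiniteDimensional K V]

lemma restrict_nondegenerate_iff_inf_orthogonal_eq_bot (hB : B.IsRefl) {W : Submodule K V} :
    (B.restrict W).Nondegenerate ↔ W ⊓ B.orthogonal W = ⊥ :=
  ⟨fun h => (B.isCompl_orthogonal_of_restrict_nondegenerate hB h).inf_eq_bot,
    fun h => B.nondegenerate_restrict_of_disjoint_orthogonal hB (disjoint_iff.2 h)⟩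

lemma IsAlt.apply_ne_zero_iff_linearIndependent (hB : B.IsAlt) (hnd : B.Nondegenerate)
    (hV : finrank K V = 2) {x y : V} : B x y ≠ 0 ↔ LinearIndependent K ![x, y] := by
  refine ⟨hB.linearIndependent_of_apply_ne_zero, fun h => ?_⟩
  have htop : span K {x, y} = ⊤ :=
    eq_top_of_finrank_eq ((linearIndependent_pair_iff_finrank_span.1 h).trans hV.symm)
  rw [← hB.span_pair_inf_orthogonal_eq_bot_iff (x := x) (h.ne_zero 0), htop,
    orthogonal_top_eq_bot hnd, inf_bot_eq]

def planesWithDegenerateSum (B : LinearMap.BilinForm K V) (S : Submodule K V) :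
    Set (Submodule K V) :=
  {W | finrank K W = 2 ∧ (B.restrict W).Nondegenerate ∧ finrank K ↥(S ⊔ W) = 4 ∧
    (S ⊔ W) ⊓ B.orthogonal (S ⊔ W) ≠ ⊥}

variable {S : Submodule K V}

lemma IsAlt.span_pair_add_mem_planesWithDegenerateSum_iff (hB : B.IsAlt)
    (hS : finrank K S = 2) (hSnd : (B.restrict S).Nondegenerate) (s₁ s₂ : S)
    (t₁ t₂ : B.orthogonal S) :
    span K {(s₁ : V) + t₁, (s₂ : V) + t₂} ∈ B.planesWithDegenerateSum S ↔
      B.restrict S s₁ s₂ ≠ 0 ∧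
        (LinearIndependent K ![t₁, t₂] ∧ B.restrict (B.orthogonal S) t₁ t₂ = 0) := by
  have hTS : span K {(t₁ : V), (t₂ : V)} ≤ B.orthogonal S := by
    simpa only [span_le, Set.insert_subset_iff, Set.singleton_subset_iff] using ⟨t₁.2, t₂.2⟩
  have hST : S ⊓ span K {(t₁ : V), (t₂ : V)} = ⊥ := eq_bot_mono (inf_le_inf_left S hTS)
    ((restrict_nondegenerate_iff_inf_orthogonal_eq_bot hB.isRefl).1 hSnd)
  have hrank : finrank K ↥(S ⊔ span K {(t₁ : V), (t₂ : V)}) = 4 ↔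
      LinearIndependent K ![t₁, t₂] := by
    have := finrank_sup_add_finrank_inf_eq S (span K {(t₁ : V), (t₂ : V)})
    rw [hST, finrank_bot, hS] at this
    rw [← linearIndependent_pair_coe_iff, linearIndependent_pair_iff_finrank_span]
    omega
  have hcross : B (s₁ + t₁) (s₂ + t₂) = B s₁ s₂ + B t₁ t₂ := by
    have h₁ : B s₁ t₂ = 0 := t₂.2 s₁ s₁.2
    have h₂ : B t₁ s₂ = 0 := hB.isRefl _ _ (t₁.2 s₂ s₂.2)
    simp [h₁, h₂]
  simp only [planesWithDegenerateSum, Set.mem_ofPred_eq, restrict_apply, domRestrict_apply]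
  rw [sup_span_pair_add_eq s₁.2 s₂.2, sup_inf_orthogonal_sup_of_le_orthogonal hSnd hTS, hrank,
    restrict_nondegenerate_iff_inf_orthogonal_eq_bot hB.isRefl]
  constructor
  · rintro ⟨hW, hWnd, ht, hTdeg⟩
    have hw₁ : (s₁ : V) + t₁ ≠ 0 := (linearIndependent_pair_iff_finrank_span.2 hW).ne_zero 0
    have ht₁ : (t₁ : V) ≠ 0 := (linearIndependent_pair_coe_iff.2 ht).ne_zero 0
    have htt : B t₁ t₂ = 0 := by
      by_contra h
      exact hTdeg ((hB.span_pair_inf_orthogonal_eq_bot_iff ht₁ _).2 h)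
    have hww := (hB.span_pair_inf_orthogonal_eq_bot_iff hw₁ _).1 hWnd
    rw [hcross, htt, add_zero] at hww
    exact ⟨hww, ht, htt⟩
  · rintro ⟨hss, ht, htt⟩
    have hww : B (s₁ + t₁) (s₂ + t₂) ≠ 0 := by rwa [hcross, htt, add_zero]
    have hw := hB.linearIndependent_of_apply_ne_zero hww
    have hw₁ : (s₁ : V) + t₁ ≠ 0 := hw.ne_zero 0
    have ht₁ : (t₁ : V) ≠ 0 := (linearIndependent_pair_coe_iff.2 ht).ne_zero 0
    refine ⟨linearIndependent_pair_iff_finrank_span.1 hw,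
      (hB.span_pair_inf_orthogonal_eq_bot_iff hw₁ _).2 hww, ht, ?_⟩
    rw [Ne, hB.span_pair_inf_orthogonal_eq_bot_iff ht₁, not_not]
    exact htt

variable [Fintype K]

lemma IsAlt.natCard_apply_ne_zero (hB : B.IsAlt) (hnd : B.Nondegenerate) (hV : finrank K V = 2) :
    Nat.card {p : V × V // B p.1 p.2 ≠ 0} =
      (Fintype.card K ^ 2 - 1) * (Fintype.card K ^ 2 - Fintype.card K) := by
  rw [Nat.card_congr (Equiv.subtypeEquivRight fun p =>
      hB.apply_ne_zero_iff_linearIndependent hnd hV),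
    natCard_linearIndependent_pair hV.ge, hV]

lemma IsAlt.natCard_linearIndependent_pair_apply_eq_zero (hB : B.IsAlt) (hnd : B.Nondegenerate) :
    Nat.card {p : V × V // LinearIndependent K ![p.1, p.2] ∧ B p.1 p.2 = 0} =
      (Fintype.card K ^ finrank K V - 1) *
        (Fintype.card K ^ (finrank K V - 1) - Fintype.card K) := by
  have := Module.finite_of_finite K (M := V)
  have hiff (p : V × V) : LinearIndependent K ![p.1, p.2] ∧ B p.1 p.2 = 0 ↔
      p.1 ≠ 0 ∧ (p.2 ∈ LinearMap.ker (B p.1) ∧ p.2 ∉ K ∙ p.1) := by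
    by_cases hx : p.1 = 0
    · exact iff_of_false (fun h => h.1.ne_zero 0 hx) (fun h => h.1 hx)
    · simp [LinearIndependent.pair_iff' hx, mem_span_singleton, hx, and_comm]
  rw [Nat.card_congr (Equiv.subtypeEquivRight hiff),
    Nat.card_subtype_prod_of_card_eq (fun x : V => x ≠ 0)
      (fun x y => y ∈ LinearMap.ker (B x) ∧ y ∉ K ∙ x) fun x hx => ?_,
    natCard_subtype_ne_zero (K := K)]
  have hBx : B x ≠ 0 := fun h => hx (hnd.1 x fun y => by simp [h])
  have hle : K ∙ x ≤ LinearMap.ker (B x) := by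
    simp [span_singleton_le_iff_mem, hB.self_eq_zero]
  rw [natCard_mem_and_not_mem hle, finrank_span_singleton hx, pow_one,
    ← Module.Dual.finrank_ker_add_one_of_ne_zero hBx, Nat.add_sub_cancel]

theorem IsAlt.natCard_planesWithDegenerateSum (hB : B.IsAlt) (hnd : B.Nondegenerate)
    (hS : finrank K S = 2) (hSnd : (B.restrict S).Nondegenerate) :
    Nat.card (B.planesWithDegenerateSum S) =
      (Fintype.card K ^ (finrank K V - 2) - 1) *
        (Fintype.card K ^ (finrank K V - 3) - Fintype.card K) := by
  set S' := B.orthogonal S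
  have hcompl : IsCompl S S' := B.isCompl_orthogonal_of_restrict_nondegenerate hB.isRefl hSnd
  have hS' : finrank K S' = finrank K V - 2 := by rw [finrank_orthogonal hnd, hS]
  have hS'nd : (B.restrict S').Nondegenerate := by
    rw [restrict_nondegenerate_iff_isCompl_orthogonal hB.isRefl,
      orthogonal_orthogonal hnd hB.isRefl]
    exact hcompl.symm
  let e := (prodEquivOfIsCompl S S' hcompl).toEquiv
  let E : (S × S) × (S' × S') ≃ V × V :=
    (Equiv.prodProdProdComm S S S' S').trans (e.prodCongr e)
  have hE (x : (S × S) × (S' × S')) : E x = ((x.1.1 : V) + x.2.1, (x.1.2 : V) + x.2.2) := rfl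
  have hpairs := Nat.card_congr ((Equiv.subtypeProdEquivProd
    (p := fun s : S × S => B.restrict S s.1 s.2 ≠ 0)
    (q := fun t : S' × S' =>
      LinearIndependent K ![t.1, t.2] ∧ B.restrict S' t.1 t.2 = 0)).symm.trans
    (E.subtypeEquiv (q := fun p => span K {p.1, p.2} ∈ B.planesWithDegenerateSum S) fun x => by
      rw [hE]; exact (hB.span_pair_add_mem_planesWithDegenerateSum_iff hS hSnd _ _ _ _).symm))
  rw [Nat.card_prod, IsAlt.natCard_apply_ne_zero (B := B.restrict S) (fun s => hB s) hSnd hS,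
    IsAlt.natCard_linearIndependent_pair_apply_eq_zero (B := B.restrict S') (fun t => hB t) hS'nd,
    hS', natCard_span_pair_mem _ fun W hW => hW.1,
    show finrank K V - 2 - 1 = finrank K V - 3 by omega]
    at hpairs
  have hpos : 0 < (Fintype.card K ^ 2 - 1) * (Fintype.card K ^ 2 - Fintype.card K) := by
    have := Fintype.one_lt_card (α := K)
    have : Fintype.card K < Fintype.card K ^ 2 := by nlinarith
    exact Nat.mul_pos (by omega) (by omega)
  exact Nat.eq_of_mul_eq_mul_right hpos (hpairs.symm.trans (mul_comm _ _))

end LinearMap.BilinForm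

theorem stmt_8 {K V : Type*} [Field K] [Fintype K] [AddCommGroup V] [Module K V]
    (q n : ℕ) (hq : Fintype.card K = q) (hn : 2 ≤ n)
    (hV : Module.finrank K V = 2 * n)
    (Ψ : LinearMap.BilinForm K V) (hΨ : Ψ.IsAlt) (hnd : Ψ.Nondegenerate)
    (S : Submodule K V) (hS2 : Module.finrank K S = 2)
    (hSnd : (Ψ.restrict S).Nondegenerate) :
    Nat.card {W : Submodule K V //
        Module.finrank K W = 2 ∧ (Ψ.restrict W).Nondegenerate ∧
        Module.finrank K ↥(S ⊔ W) = 4 ∧ (S ⊔ W) ⊓ Ψ.orthogonal (S ⊔ W) ≠ ⊥} =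
      (q ^ (2 * n - 2) - 1) * (q ^ (2 * n - 3) - q) := by
  have : FiniteDimensional K V := FiniteDimensional.of_finrank_pos (by omega)
  subst hq
  rw [← hV]
  exact hΨ.natCard_planesWithDegenerateSum hnd hS2 hSnd
end

section
/- Let V be a symplectic space of dimension 2n over a field K with n ≥ 3. Then the orthogonality graph G(V) on 2-dimensional non-degenerate subspaces is connected. -/
/-!
Let `A`, `B` be nondegenerate planes. As `dim V ≥ 6`, `(A ⊔ B)⊥ ≠ 0`; take `w ≠ 0` in it and
`z ⊥ A` with `Ψ w z ≠ 0`, so that `C = ⟨w, z⟩` is a neighbour of `A`. If `(C ⊔ B)⊥` is not totally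
isotropic it contains a nondegenerate plane, a common neighbour of `C` and `B`. Otherwise
`(C ⊔ B)⊥ ⊆ C ⊔ B`, and counting dimensions `C ⊔ B = B ⊕ (C ⊔ B)⊥`; then `w ∈ C`, being orthogonal
to `B`, lies in `(C ⊔ B)⊥`, contradicting `Ψ w z ≠ 0`. Hence `G(V)` has diameter at most `3`.
-/

open Module Submodule

namespace LinearMap.BilinForm

variable {K V : Type*} [Field K] [AddCommGroup V] [Module K V] {Ψ : LinearMap.BilinForm K V}

lemma exists_apply_ne_zero_of_restrict_nondegenerate {W : Submodule K V}
    (hW : (Ψ.restrict W).Nondegenerate) {w : V} (hw : w ∈ W) (hw0 : w ≠ 0) :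
    ∃ z ∈ W, Ψ w z ≠ 0 := by
  by_contra! h
  exact hw0 (congrArg Subtype.val (hW.1 ⟨w, hw⟩ fun z => h z z.2))

lemma restrict_orthogonal_nondegenerate [FiniteDimensional K V] (hnd : Ψ.Nondegenerate)
    (hrefl : Ψ.IsRefl) {W : Submodule K V} (hW : (Ψ.restrict W).Nondegenerate) :
    (Ψ.restrict (Ψ.orthogonal W)).Nondegenerate := by
  refine Ψ.nondegenerate_restrict_of_disjoint_orthogonal hrefl ?_
  rw [orthogonal_orthogonal hnd hrefl]
  exact (isCompl_orthogonal_of_restrict_nondegenerate hrefl hW).disjoint.symm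

/-- Over an alternating form, `Ψ (a • u + b • v)` pairs with `u` and `v` to `-b * Ψ u v` and
`a * Ψ u v`. -/
lemma eq_zero_of_apply_smul_add_smul (hΨ : Ψ.IsAlt) {u v : V} (huv : Ψ u v ≠ 0) {a b : K}
    (hu : Ψ (a • u + b • v) u = 0) (hv : Ψ (a • u + b • v) v = 0) : a = 0 ∧ b = 0 := by
  simp only [map_add, map_smul, LinearMap.add_apply, LinearMap.smul_apply, smul_eq_mul,
    hΨ u, hΨ v, mul_zero, add_zero, zero_add, ← LinearMap.IsAlt.neg hΨ u v, mul_neg,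
    neg_eq_zero] at hu hv
  exact ⟨(mul_eq_zero.1 hv).resolve_right huv, (mul_eq_zero.1 hu).resolve_right huv⟩

lemma finrank_span_pair_eq_two (hΨ : Ψ.IsAlt) {u v : V} (huv : Ψ u v ≠ 0) :
    finrank K (span K ({u, v} : Set V)) = 2 := by
  have hli : LinearIndependent K ![u, v] := by
    refine LinearIndependent.pair_iff.2 fun s t hst => ?_
    exact eq_zero_of_apply_smul_add_smul hΨ huv (by simp [hst]) (by simp [hst])
  have := finrank_span_eq_card hli
  rwa [Matrix.range_cons_cons_empty, Fintype.card_fin] at this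

lemma restrict_span_pair_nondegenerate (hΨ : Ψ.IsAlt) {u v : V} (huv : Ψ u v ≠ 0) :
    (Ψ.restrict (span K ({u, v} : Set V))).Nondegenerate := by
  refine (IsRefl.nondegenerate_iff_separatingLeft (B := Ψ.restrict (span K {u, v}))
    fun x y => hΨ.isRefl x y).2 fun x hx => ?_
  obtain ⟨a, b, hab⟩ := mem_span_pair.1 x.2
  have hu : Ψ x u = 0 := hx ⟨u, subset_span (by simp)⟩
  have hv : Ψ x v = 0 := hx ⟨v, subset_span (by simp)⟩
  rw [← hab] at hu hv
  obtain ⟨rfl, rfl⟩ := eq_zero_of_apply_smul_add_smul hΨ huv hu hv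
  ext
  simp [← hab]

/-- `Y` and `U⊥ ⊆ Y⊥` are independent, and the dimension bound makes them fill `U`. -/
lemma sup_orthogonal_eq_of_orthogonal_le [FiniteDimensional K V] (hnd : Ψ.Nondegenerate)
    (hrefl : Ψ.IsRefl) {U Y : Submodule K V} (hY : (Ψ.restrict Y).Nondegenerate) (hYU : Y ≤ U)
    (hU : Ψ.orthogonal U ≤ U) (hdim : 2 * finrank K U ≤ finrank K V + finrank K Y) :
    Y ⊔ Ψ.orthogonal U = U := by
  have hdisj : Y ⊓ Ψ.orthogonal U = ⊥ :=
    ((isCompl_orthogonal_of_restrict_nondegenerate hrefl hY).disjoint.mono_right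
      (orthogonal_le hYU)).eq_bot
  have hsum := finrank_sup_add_finrank_inf_eq Y (Ψ.orthogonal U)
  rw [hdisj, finrank_bot, finrank_orthogonal hnd] at hsum
  have := finrank_le U
  exact eq_of_le_of_finrank_le (sup_le hYU hU) (by omega)

lemma mem_orthogonal_of_mem_orthogonal_of_orthogonal_le [FiniteDimensional K V]
    (hnd : Ψ.Nondegenerate) (hrefl : Ψ.IsRefl) {U Y : Submodule K V}
    (hY : (Ψ.restrict Y).Nondegenerate) (hYU : Y ≤ U) (hU : Ψ.orthogonal U ≤ U)
    (hdim : 2 * finrank K U ≤ finrank K V + finrank K Y) {x : V} (hxU : x ∈ U)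
    (hxY : x ∈ Ψ.orthogonal Y) : x ∈ Ψ.orthogonal U := by
  rw [← sup_orthogonal_eq_of_orthogonal_le hnd hrefl hY hYU hU hdim] at hxU
  obtain ⟨y, hy, w, hw, rfl⟩ := mem_sup.1 hxU
  have hyY : y ∈ Ψ.orthogonal Y := by
    simpa using sub_mem hxY (orthogonal_le hYU hw)
  have hy0 : y = 0 :=
    disjoint_def.1 (isCompl_orthogonal_of_restrict_nondegenerate hrefl hY).disjoint y hy hyY
  simpa [hy0] using hw

/-- The vertices of the orthogonality graph `G(V)`. -/
abbrev NondegPlane (Ψ : LinearMap.BilinForm K V) : Type _ :=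
  {W : Submodule K V // finrank K W = 2 ∧ (Ψ.restrict W).Nondegenerate}

/-- `G(V)`; `SimpleGraph.fromRel` also requires adjacent vertices to be distinct, which is
automatic for orthogonal nondegenerate planes. -/
def orthogonalityGraph (Ψ : LinearMap.BilinForm K V) : SimpleGraph (NondegPlane Ψ) :=
  SimpleGraph.fromRel fun A B => ∀ a ∈ A.1, ∀ b ∈ B.1, Ψ a b = 0

namespace NondegPlane

def ofPair (hΨ : Ψ.IsAlt) {u v : V} (huv : Ψ u v ≠ 0) : NondegPlane Ψ :=
  ⟨span K {u, v}, finrank_span_pair_eq_two hΨ huv, restrict_span_pair_nondegenerate hΨ huv⟩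

lemma ofPair_le (hΨ : Ψ.IsAlt) {u v : V} (huv : Ψ u v ≠ 0) {W : Submodule K V} (hu : u ∈ W)
    (hv : v ∈ W) : (ofPair hΨ huv).1 ≤ W :=
  span_le.2 (Set.insert_subset_iff.2 ⟨hu, Set.singleton_subset_iff.2 hv⟩)

lemma not_le_orthogonal (A : NondegPlane Ψ) : ¬ A.1 ≤ Ψ.orthogonal A.1 := by
  obtain ⟨W, hW2, hWnd⟩ := A
  intro h
  have hW : W ≠ ⊥ := by
    rintro rfl
    simp at hW2
  obtain ⟨a, ha, ha0⟩ := exists_mem_ne_zero_of_ne_bot hW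
  obtain ⟨b, hb, hab⟩ := exists_apply_ne_zero_of_restrict_nondegenerate hWnd ha ha0
  exact hab (h hb a ha)

lemma finrank_sup_le [FiniteDimensional K V] (A B : NondegPlane Ψ) :
    finrank K ↥(A.1 ⊔ B.1) ≤ 4 := by
  have := finrank_add_le_finrank_add_finrank A.1 B.1
  rw [A.2.1, B.2.1] at this
  exact this

lemma nonempty [Nontrivial V] (hΨ : Ψ.IsAlt) (hnd : Ψ.Nondegenerate) :
    Nonempty (NondegPlane Ψ) := by
  obtain ⟨x, hx⟩ := exists_ne (0 : V)
  obtain ⟨y, hy⟩ : ∃ y, Ψ x y ≠ 0 := by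
    by_contra! h
    exact hx (hnd.1 x h)
  exact ⟨ofPair hΨ hy⟩

/-- As `U = U⊥⊥`, the hypothesis says that `U⊥` is not totally isotropic. -/
lemma exists_le_orthogonal [FiniteDimensional K V] (hΨ : Ψ.IsAlt) (hnd : Ψ.Nondegenerate)
    {U : Submodule K V} (hU : ¬ Ψ.orthogonal U ≤ U) :
    ∃ C : NondegPlane Ψ, C.1 ≤ Ψ.orthogonal U := by
  obtain ⟨u, hu, huU⟩ := SetLike.not_le_iff_exists.1 hU
  rw [← orthogonal_orthogonal hnd hΨ.isRefl U, mem_orthogonal_iff] at huU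
  push Not at huU
  obtain ⟨v, hv, hvu⟩ := huU
  exact ⟨ofPair hΨ hvu, ofPair_le hΨ hvu hv hu⟩

end NondegPlane

open NondegPlane

lemma orthogonalityGraph_adj_of_le_orthogonal {A C : NondegPlane Ψ}
    (h : C.1 ≤ Ψ.orthogonal A.1) : (orthogonalityGraph Ψ).Adj A C := by
  refine SimpleGraph.fromRel_adj _ _ _ |>.2 ⟨?_, Or.inl fun a ha c hc => h hc a ha⟩
  rintro rfl
  exact not_le_orthogonal A h

lemma orthogonalityGraph_reachable_of_not_orthogonal_le [FiniteDimensional K V]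
    (hΨ : Ψ.IsAlt) (hnd : Ψ.Nondegenerate) {A B : NondegPlane Ψ}
    (h : ¬ Ψ.orthogonal (A.1 ⊔ B.1) ≤ A.1 ⊔ B.1) : (orthogonalityGraph Ψ).Reachable A B := by
  obtain ⟨C, hC⟩ := exists_le_orthogonal hΨ hnd h
  have hAC := orthogonalityGraph_adj_of_le_orthogonal (hC.trans (orthogonal_le le_sup_left))
  have hBC := orthogonalityGraph_adj_of_le_orthogonal (hC.trans (orthogonal_le le_sup_right))
  exact hAC.reachable.trans hBC.reachable.symm

lemma orthogonalityGraph_reachable [FiniteDimensional K V] (hΨ : Ψ.IsAlt)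
    (hnd : Ψ.Nondegenerate) (hV : 6 ≤ finrank K V) (A B : NondegPlane Ψ) :
    (orthogonalityGraph Ψ).Reachable A B := by
  have hAB := finrank_sup_le A B
  have hW : Ψ.orthogonal (A.1 ⊔ B.1) ≠ ⊥ := fun hbot => by
    have := finrank_orthogonal hnd (A.1 ⊔ B.1)
    rw [hbot, finrank_bot] at this
    omega
  obtain ⟨w, hw, hw0⟩ := exists_mem_ne_zero_of_ne_bot hW
  have hwA : w ∈ Ψ.orthogonal A.1 := orthogonal_le le_sup_left hw
  obtain ⟨z, hz, hwz⟩ := exists_apply_ne_zero_of_restrict_nondegenerate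
    (restrict_orthogonal_nondegenerate hnd hΨ.isRefl A.2.2) hwA hw0
  set C := ofPair hΨ hwz
  have hAC : (orthogonalityGraph Ψ).Adj A C :=
    orthogonalityGraph_adj_of_le_orthogonal (ofPair_le hΨ hwz hwA hz)
  refine hAC.reachable.trans (orthogonalityGraph_reachable_of_not_orthogonal_le hΨ hnd ?_)
  intro hCB
  have hwC : w ∈ C.1 := subset_span (by simp)
  have hzC : z ∈ C.1 := subset_span (by simp)
  have hw' : w ∈ Ψ.orthogonal (C.1 ⊔ B.1) :=
    mem_orthogonal_of_mem_orthogonal_of_orthogonal_le hnd hΨ.isRefl B.2.2 le_sup_right hCB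
      (by have := finrank_sup_le C B; rw [B.2.1]; omega) (mem_sup_left hwC)
      (orthogonal_le le_sup_right hw)
  exact hwz (hΨ.isRefl _ _ (hw' z (mem_sup_left hzC)))

theorem orthogonalityGraph_connected [FiniteDimensional K V] (hΨ : Ψ.IsAlt)
    (hnd : Ψ.Nondegenerate) (hV : 6 ≤ finrank K V) : (orthogonalityGraph Ψ).Connected := by
  have : Nontrivial V := nontrivial_of_finrank_pos (by omega : 0 < finrank K V)
  have := NondegPlane.nonempty hΨ hnd
  exact ⟨orthogonalityGraph_reachable hΨ hnd hV⟩

end LinearMap.BilinForm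

theorem stmt_15 {K V : Type*} [Field K] [AddCommGroup V] [Module K V]
    (n : ℕ) (hn : 3 ≤ n) (hV : Module.finrank K V = 2 * n)
    (Ψ : LinearMap.BilinForm K V) (hΨ : Ψ.IsAlt) (hnd : Ψ.Nondegenerate) :
    (SimpleGraph.fromRel
      (fun A B : {W : Submodule K V //
          Module.finrank K W = 2 ∧ (Ψ.restrict W).Nondegenerate} =>
        ∀ a ∈ A.1, ∀ b ∈ B.1, Ψ a b = 0)).Connected := by
  have : FiniteDimensional K V := .of_finrank_pos (by omega)
  exact LinearMap.BilinForm.orthogonalityGraph_connected hΨ hnd (by omega)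
end
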